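/- Fix ε > 0 and an integer k ≥ 1. Suppose A = {x_1, x_2, …, x_k} ⊂ ℝ with x_1 ≤ x_2 ≤ … ≤ x_k attains the minimum of E_{x∼L_ε(0)}[ min_{a∈A′} |x − a| ] over all subsets A′ ⊆ ℝ of size at most k. Define y_i = (x_i + x_{i+1})/2 for i = 1, …, k−1, y_0 = −∞, and y_k = +∞. Then for every i ∈ {1,…,k}: P_{z∼L_ε(0)}( y_{i−1} < z < x_i ) = P_{z∼L_ε(0)}( x_i < z < y_i ). -/

import Mathlib

open MeasureTheory Real Filter Set
open scoped ENNReal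

noncomputable section

/-- The Laplace distribution of scale `1/ε` centered at `c`. -/
def laplace (ε c : ℝ) : Measure ℝ :=
  volume.withDensity fun y => ENNReal.ofReal ((ε / 2) * Real.exp (-(ε * |y - c|)))

/-- The expected distance from a Laplace-distributed point of scale `1/ε` centered at
`0` to the nearest of the points `b_1,…,b_k`. -/
def expErr (ε : ℝ) {k : ℕ} (b : Fin k → ℝ) : ℝ :=
  ∫ y : ℝ, (⨅ i, |y - b i|) * ((ε / 2) * Real.exp (-(ε * |y|)))

/-- The extended-real midpoints `y_0 = −∞`, `y_j = (x_j + x_{j+1})/2` for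
`1 ≤ j ≤ k−1` (`1`-indexed), and `y_k = +∞`. -/
def ybar {k : ℕ} (x : Fin k → ℝ) (j : ℕ) : EReal :=
  if j = 0 then ⊥
  else if hj : j < k then
    (((x ⟨j - 1, Nat.lt_of_le_of_lt (Nat.pred_le j) hj⟩ + x ⟨j, hj⟩) / 2 : ℝ) : EReal)
  else ⊤

/-- density -/
def lapw (ε y : ℝ) : ℝ := (ε / 2) * Real.exp (-(ε * |y|))

/-- nearest distance -/
def nearest {k : ℕ} (b : Fin k → ℝ) (y : ℝ) : ℝ := ⨅ j, |y - b j|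

lemma lapw_pos {ε : ℝ} (hε : 0 < ε) (y : ℝ) : 0 < lapw ε y :=
  mul_pos (by linarith) (Real.exp_pos _)

lemma lapw_le {ε : ℝ} (hε : 0 < ε) (y : ℝ) : lapw ε y ≤ ε / 2 := by
  have h1 : Real.exp (-(ε * |y|)) ≤ 1 := by
    rw [Real.exp_le_one_iff]
    have : 0 ≤ ε * |y| := mul_nonneg hε.le (abs_nonneg _)
    linarith
  calc lapw ε y ≤ (ε/2) * 1 := mul_le_mul_of_nonneg_left h1 (by linarith)
  _ = ε / 2 := by ring

lemma lapw_continuous (ε : ℝ) : Continuous (lapw ε) := by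
  unfold lapw; fun_prop

lemma integrable_exp_neg_abs {a : ℝ} (ha : 0 < a) :
    Integrable (fun y : ℝ => Real.exp (-(a*|y|))) := by
  have h1 : IntegrableOn (fun y : ℝ => Real.exp (-(a*|y|))) (Ioi 0) := by
    apply (exp_neg_integrableOn_Ioi 0 ha).congr_fun ?_ measurableSet_Ioi
    intro y hy; simp [abs_of_pos (mem_Ioi.mp hy)]
  have h1' : Integrable ((Ioi (0:ℝ)).indicator (fun y : ℝ => Real.exp (-(a*|y|)))) := by
    rwa [integrable_indicator_iff measurableSet_Ioi]
  have h2' := h1'.comp_neg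
  have h2 : IntegrableOn (fun y : ℝ => Real.exp (-(a*|y|))) (Iio 0) := by
    apply (integrable_indicator_iff measurableSet_Iio).mp
    apply h2'.congr
    filter_upwards with y
    by_cases hy : y < 0
    · have h0 : (0:ℝ) < -y := by linarith
      simp [Set.indicator, hy, h0, abs_neg]
    · have h0 : ¬ ((0:ℝ) < -y) := by simp at hy ⊢; linarith
      simp [Set.indicator, hy, h0]
  rw [← integrableOn_univ, (by simp : (univ : Set ℝ) = Iio 0 ∪ Ici 0)]
  exact h2.union ((integrableOn_Ici_iff_integrableOn_Ioi).mpr h1)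

lemma lapw_integrable {ε : ℝ} (hε : 0 < ε) : Integrable (lapw ε) :=
  (integrable_exp_neg_abs hε).const_mul _

section nearest
variable {k : ℕ} [NeZero k]

lemma nearest_le (b : Fin k → ℝ) (y : ℝ) (j : Fin k) : nearest b y ≤ |y - b j| :=
  ciInf_le ⟨0, by rintro z ⟨j', rfl⟩; positivity⟩ j

lemma le_nearest {a : ℝ} {b : Fin k → ℝ} {y : ℝ} (h : ∀ j, a ≤ |y - b j|) :
    a ≤ nearest b y := le_ciInf h

lemma nearest_nonneg (b : Fin k → ℝ) (y : ℝ) : 0 ≤ nearest b y :=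
  le_nearest fun j => abs_nonneg _

lemma nearest_eq_inf' (b : Fin k → ℝ) (y : ℝ) :
    nearest b y = Finset.univ.inf' Finset.univ_nonempty (fun j => |y - b j|) :=
  (Finset.inf'_univ_eq_ciInf _).symm

lemma nearest_continuous (b : Fin k → ℝ) : Continuous (nearest b) := by
  have : Continuous (fun y : ℝ => Finset.univ.inf' (Finset.univ_nonempty (α := Fin k))
      (fun j => |y - b j|)) := by
    apply Continuous.finset_inf'_apply
    intro j _
    fun_prop
  exact this.congr fun y => (nearest_eq_inf' b y).symm

lemma integrable_nearest_mul {ε : ℝ} (hε : 0 < ε) (b : Fin k → ℝ) :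
    Integrable (fun y => nearest b y * lapw ε y) := by
  set C : ℝ := |b ⟨0, Nat.pos_of_ne_zero (NeZero.ne k)⟩|
  have hC : 0 ≤ C := abs_nonneg _
  have key : ∀ y : ℝ, ‖nearest b y * lapw ε y‖ ≤
      ((2/ε + C) * (ε/2)) * Real.exp (-((ε/2)*|y|)) := by
    intro y
    have h1 : nearest b y ≤ |y| + C := by
      calc nearest b y ≤ |y - b ⟨0, Nat.pos_of_ne_zero (NeZero.ne k)⟩| := nearest_le b y _
      _ ≤ |y| + C := abs_sub _ _
    have h2 : |y| + C ≤ (2/ε + C) * Real.exp ((ε/2)*|y|) := by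
      have e1 : (ε/2)*|y| ≤ Real.exp ((ε/2)*|y|) := (Real.add_one_le_exp _).trans' (by linarith)
      have e2 : (1:ℝ) ≤ Real.exp ((ε/2)*|y|) := by
        rw [Real.one_le_exp_iff]; positivity
      have e3 : |y| ≤ (2/ε) * Real.exp ((ε/2)*|y|) := by
        calc |y| = (2/ε) * ((ε/2)*|y|) := by field_simp
        _ ≤ (2/ε) * Real.exp ((ε/2)*|y|) := by
            apply mul_le_mul_of_nonneg_left e1 (by positivity)
      nlinarith
    have h3 : 0 ≤ nearest b y := nearest_nonneg b y
    have h4 : 0 < lapw ε y := lapw_pos hε y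
    have hep := Real.exp_pos ((ε/2)*|y|)
    have hen := Real.exp_pos (-((ε/2)*|y|))
    rw [norm_eq_abs, abs_of_nonneg (by positivity)]
    have hsplit : lapw ε y = (Real.exp (-((ε/2)*|y|)) * (ε/2)) * Real.exp (-((ε/2)*|y|)) := by
      unfold lapw
      rw [show Real.exp (-(ε*|y|)) = Real.exp (-((ε/2)*|y|)) * Real.exp (-((ε/2)*|y|)) by
        rw [← Real.exp_add]; ring_nf]
      ring
    have h5 : (|y|+C) * Real.exp (-((ε/2)*|y|)) ≤ 2/ε + C := by
      rw [Real.exp_neg, ← div_eq_mul_inv, div_le_iff₀ hep]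
      exact h2
    calc nearest b y * lapw ε y ≤ (|y| + C) * lapw ε y :=
          mul_le_mul_of_nonneg_right h1 h4.le
    _ = ((|y|+C) * Real.exp (-((ε/2)*|y|))) * ((ε/2) * Real.exp (-((ε/2)*|y|))) := by
        rw [hsplit]; ring
    _ ≤ (2/ε + C) * ((ε/2) * Real.exp (-((ε/2)*|y|))) := by
        apply mul_le_mul_of_nonneg_right h5 (by positivity)
    _ = ((2/ε + C) * (ε/2)) * Real.exp (-((ε/2)*|y|)) := by ring
  apply Integrable.mono' (((integrable_exp_neg_abs (by positivity : (0:ℝ) < ε/2)).const_mul ((2/ε + C) * (ε/2))))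
  · exact ((nearest_continuous b).mul (lapw_continuous ε)).aestronglyMeasurable
  · filter_upwards with y using key y

lemma expErr_eq {ε : ℝ} (b : Fin k → ℝ) :
    expErr ε b = ∫ y : ℝ, nearest b y * lapw ε y := rfl

end nearest

lemma laplace_apply {ε : ℝ} (hε : 0 < ε) {S : Set ℝ} (hS : MeasurableSet S) :
    laplace ε 0 S = ENNReal.ofReal (∫ y in S, lapw ε y) := by
  rw [laplace, withDensity_apply _ hS]
  rw [MeasureTheory.ofReal_integral_eq_lintegral_ofReal
    ((lapw_integrable hε).integrableOn)
    (Filter.Eventually.of_forall fun y => (lapw_pos hε y).le)]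
  congr 1 with y
  simp [lapw]


section chunk2
variable {k : ℕ} [NeZero k]

lemma abs_near_left {p q y : ℝ} (hpq : p ≤ q) (hy : y ≤ (p+q)/2) : |y - p| ≤ |y - q| := by
  rw [abs_le]
  constructor
  · linarith [neg_abs_le (y - q)]
  · linarith [neg_le_abs (y - q)]

lemma abs_near_right {p q y : ℝ} (hpq : p ≤ q) (hy : (p+q)/2 ≤ y) : |y - q| ≤ |y - p| := by
  rw [abs_le]
  constructor
  · linarith [le_abs_self (y - p)]
  · linarith [le_abs_self (y - p)]

lemma nearest_update_le (x : Fin k → ℝ) {i j : Fin k} (hij : j ≠ i) (s : ℝ) {y : ℝ}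
    (h : |y - x j| ≤ |y - x i|) :
    nearest (Function.update x i s) y ≤ nearest x y := by
  apply le_nearest
  intro l
  by_cases hl : l = i
  · subst hl
    calc nearest (Function.update x l s) y ≤ |y - Function.update x l s j| := nearest_le _ _ _
    _ = |y - x j| := by rw [Function.update_of_ne hij]
    _ ≤ |y - x l| := h
  · calc nearest (Function.update x i s) y ≤ |y - Function.update x i s l| := nearest_le _ _ _
    _ = |y - x l| := by rw [Function.update_of_ne hl]

lemma nearest_update_le_self (x : Fin k → ℝ) (i : Fin k) (s : ℝ) (y : ℝ) :
    nearest (Function.update x i s) y ≤ |y - s| := by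
  have := nearest_le (Function.update x i s) y i
  rwa [Function.update_self] at this

lemma nearest_update_le_add (x : Fin k → ℝ) (i : Fin k) (s : ℝ) (y : ℝ) :
    nearest (Function.update x i s) y ≤ nearest x y + |s - x i| := by
  rw [← sub_le_iff_le_add]
  apply le_nearest
  intro l
  by_cases hl : l = i
  · subst hl
    have h1 : nearest (Function.update x l s) y ≤ |y - s| := nearest_update_le_self x l s y
    have h2 : |y - s| ≤ |y - x l| + |x l - s| := abs_sub_le _ _ _
    have h3 : |x l - s| = |s - x l| := abs_sub_comm _ _
    linarith
  · have := nearest_le (Function.update x i s) y l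
    rw [Function.update_of_ne hl] at this
    linarith [abs_nonneg (s - x i)]

lemma optimal_injective {ε : ℝ} (hε : 0 < ε) {x : Fin k → ℝ}
    (hopt : ∀ b : Fin k → ℝ, expErr ε x ≤ expErr ε b) : Function.Injective x := by
  intro j j' hjj'
  by_contra hne
  set M := Finset.univ.sup' Finset.univ_nonempty x with hM
  set s := M + 1 with hsdef
  have hs : ∀ l, x l + 1 ≤ s := fun l => by
    have : x l ≤ M := Finset.le_sup' x (Finset.mem_univ l)
    simp only [hsdef]; linarith
  set b := Function.update x j' s with hb
  have hble : ∀ y, nearest b y ≤ nearest x y := fun y => by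
    apply le_nearest
    intro l
    by_cases hl : l = j'
    · subst hl
      calc nearest b y ≤ |y - b j| := nearest_le _ _ _
      _ = |y - x j| := by rw [hb, Function.update_of_ne hne]
      _ = |y - x l| := by rw [hjj']
    · calc nearest b y ≤ |y - b l| := nearest_le _ _ _
      _ = |y - x l| := by rw [hb, Function.update_of_ne hl]
  set I : Set ℝ := Set.Ioo (s - 4⁻¹) (s + 4⁻¹) with hI
  have hgap : ∀ y ∈ I, nearest x y - nearest b y ≥ 1/2 := by
    intro y hy
    obtain ⟨hy1, hy2⟩ := hy
    have h1 : nearest b y ≤ 4⁻¹ := by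
      have := nearest_update_le_self x j' s y
      rw [← hb] at this
      apply this.trans
      rw [abs_le]; constructor <;> linarith
    have h2 : (3:ℝ)/4 ≤ nearest x y := by
      apply le_nearest
      intro l
      have := hs l
      have : y - x l ≥ 3/4 := by linarith
      calc (3:ℝ)/4 ≤ y - x l := by linarith
      _ ≤ |y - x l| := le_abs_self _
    linarith
  set c0 : ℝ := (ε/2) * Real.exp (-(ε * (|s| + 1))) with hc0
  have hc0pos : 0 < c0 := by positivity
  have hwI : ∀ y ∈ I, c0 ≤ lapw ε y := by
    intro y hy
    obtain ⟨hy1, hy2⟩ := hy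
    have hyabs : |y| ≤ |s| + 1 := by
      rw [abs_le]
      constructor
      · linarith [neg_abs_le s]
      · linarith [le_abs_self s]
    rw [hc0]
    unfold lapw
    apply mul_le_mul_of_nonneg_left _ (by linarith)
    apply Real.exp_le_exp.mpr
    have : ε * |y| ≤ ε * (|s| + 1) := mul_le_mul_of_nonneg_left hyabs hε.le
    linarith
  -- integral comparison
  have hintx := integrable_nearest_mul hε x
  have hintb := integrable_nearest_mul hε b
  have hdiff : Integrable (fun y => nearest x y * lapw ε y - nearest b y * lapw ε y) :=
    hintx.sub hintb
  have hnonneg : ∀ y, 0 ≤ nearest x y * lapw ε y - nearest b y * lapw ε y := by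
    intro y
    have := hble y
    have := (lapw_pos hε y).le
    nlinarith
  have hlow : ∀ y ∈ I, (1/2) * c0 ≤ nearest x y * lapw ε y - nearest b y * lapw ε y := by
    intro y hy
    have h1 := hgap y hy
    have h2 := hwI y hy
    have h3 := (lapw_pos hε y).le
    calc (1/2) * c0 ≤ (1/2) * lapw ε y := by nlinarith
    _ ≤ (nearest x y - nearest b y) * lapw ε y := by nlinarith
    _ = nearest x y * lapw ε y - nearest b y * lapw ε y := by ring
  have hpos : 0 < expErr ε x - expErr ε b := by
    rw [expErr_eq, expErr_eq, ← MeasureTheory.integral_sub hintx hintb]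
    have step1 : (1/2) * c0 * (1/2) ≤ ∫ y in I, (nearest x y * lapw ε y - nearest b y * lapw ε y) := by
      have hIvol : (volume I).toReal = 1/2 := by
        rw [hI, Real.volume_Ioo]
        rw [ENNReal.toReal_ofReal (by norm_num)]
        norm_num
      have heq : (1/2 : ℝ) * c0 * (1/2) = ((1/2) * c0) * (volume I).toReal := by
        rw [hIvol]
      rw [heq]
      apply MeasureTheory.setIntegral_ge_of_const_le_real measurableSet_Ioo _ hlow
        hdiff.integrableOn
      rw [Real.volume_Ioo]; exact ENNReal.ofReal_ne_top
    have step2 : ∫ y in I, (nearest x y * lapw ε y - nearest b y * lapw ε y) ≤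
        ∫ y, (nearest x y * lapw ε y - nearest b y * lapw ε y) := by
      apply MeasureTheory.setIntegral_le_integral hdiff
      filter_upwards with y using hnonneg y
    nlinarith
  have := hopt b
  linarith

end chunk2
section chunk3
variable {k : ℕ} [NeZero k]

lemma ybar_succ_eq (x : Fin k → ℝ) (i : Fin k) (h : i.val + 1 < k) :
    ybar x (i.val + 1) = (((x i + x ⟨i.val + 1, h⟩) / 2 : ℝ) : EReal) := by
  rw [ybar, if_neg (by omega), dif_pos h]
  norm_num [Fin.eta]

lemma ybar_succ_top (x : Fin k → ℝ) (i : Fin k) (h : ¬ (i.val + 1 < k)) :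
    ybar x (i.val + 1) = ⊤ := by
  rw [ybar, if_neg (by omega), dif_neg h]

lemma ybar_val_eq (x : Fin k → ℝ) (i : Fin k) (h : 0 < i.val) :
    ybar x i.val =
      (((x ⟨i.val - 1, lt_of_le_of_lt (Nat.pred_le _) i.isLt⟩ + x i) / 2 : ℝ) : EReal) := by
  rw [ybar, if_neg (by omega), dif_pos i.isLt]

lemma ybar_val_zero (x : Fin k → ℝ) (i : Fin k) (h : i.val = 0) :
    ybar x i.val = ⊥ := by rw [ybar, if_pos h]

/-- If `y` is left of the left midpoint, moving `x i` anywhere does not increase the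
nearest-distance. -/
lemma nearest_update_le_of_le_mid {x : Fin k → ℝ} (hmono : Monotone x) (i : Fin k) (s : ℝ)
    {y : ℝ} (hy : (y : EReal) ≤ ybar x i.val) :
    nearest (Function.update x i s) y ≤ nearest x y := by
  rcases Nat.eq_zero_or_pos i.val with h0 | h0
  · rw [ybar_val_zero x i h0, le_bot_iff] at hy
    exact absurd hy (EReal.coe_ne_bot y)
  · set i' : Fin k := ⟨i.val - 1, lt_of_le_of_lt (Nat.pred_le _) i.isLt⟩ with hi'
    rw [ybar_val_eq x i h0, EReal.coe_le_coe_iff] at hy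
    have hi'i : i' ≠ i := by
      intro h
      have := congrArg Fin.val h
      simp only [hi'] at this
      omega
    have hle : x i' ≤ x i := hmono (by rw [Fin.le_def]; simp only [hi']; omega)
    exact nearest_update_le x hi'i s (abs_near_left hle hy)

/-- If `y` is right of the right midpoint, moving `x i` anywhere does not increase the
nearest-distance. -/
lemma nearest_update_le_of_mid_le {x : Fin k → ℝ} (hmono : Monotone x) (i : Fin k) (s : ℝ)
    {y : ℝ} (hy : ybar x (i.val + 1) ≤ (y : EReal)) :
    nearest (Function.update x i s) y ≤ nearest x y := by
  by_cases hik : i.val + 1 < k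
  · set i'' : Fin k := ⟨i.val + 1, hik⟩ with hi''
    rw [ybar_succ_eq x i hik, EReal.coe_le_coe_iff] at hy
    have hi''i : i'' ≠ i := by
      intro h
      have := congrArg Fin.val h
      simp only [hi''] at this
      omega
    have hle : x i ≤ x i'' := hmono (by rw [Fin.le_def]; simp only [hi'']; omega)
    exact nearest_update_le x hi''i s (abs_near_right hle hy)
  · rw [ybar_succ_top x i hik, top_le_iff] at hy
    exact absurd hy (EReal.coe_ne_top y)

end chunk3
section chunk4
variable {k : ℕ} [NeZero k]

lemma measurableSet_cellA (x : Fin k → ℝ) (i : Fin k) :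
    MeasurableSet {z : ℝ | ybar x i.val < (z : EReal) ∧ z < x i} := by
  have : {z : ℝ | ybar x i.val < (z : EReal) ∧ z < x i} =
      ((fun z : ℝ => (z : EReal)) ⁻¹' (Set.Ioi (ybar x i.val))) ∩ Set.Iio (x i) := rfl
  rw [this]
  exact (measurable_coe_real_ereal measurableSet_Ioi).inter measurableSet_Iio

lemma measurableSet_cellB (x : Fin k → ℝ) (i : Fin k) :
    MeasurableSet {z : ℝ | x i < z ∧ (z : EReal) < ybar x (i.val + 1)} := by
  have : {z : ℝ | x i < z ∧ (z : EReal) < ybar x (i.val + 1)} =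
      Set.Ioi (x i) ∩ ((fun z : ℝ => (z : EReal)) ⁻¹' (Set.Iio (ybar x (i.val + 1)))) := rfl
  rw [this]
  exact measurableSet_Ioi.inter (measurable_coe_real_ereal measurableSet_Iio)

lemma master_right {ε : ℝ} (hε : 0 < ε) {x : Fin k → ℝ} (hsm : StrictMono x)
    (hopt : ∀ b : Fin k → ℝ, expErr ε x ≤ expErr ε b) (i : Fin k) {t : ℝ} (ht : 0 < t)
    (hgap : ∀ j, i < j → x i + 2*t ≤ x j) :
    ∫ y in {z : ℝ | x i < z ∧ (z : EReal) < ybar x (i.val + 1)}, lapw ε y ≤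
      (∫ y in {z : ℝ | ybar x i.val < (z : EReal) ∧ z < x i}, lapw ε y) + ε * t := by
  set c := x i with hc
  set s := c + t with hs
  set b := Function.update x i s with hb
  set A := {z : ℝ | ybar x i.val < (z : EReal) ∧ z < x i} with hA
  set B := {z : ℝ | x i < z ∧ (z : EReal) < ybar x (i.val + 1)} with hB
  have hAm : MeasurableSet A := measurableSet_cellA x i
  have hBm : MeasurableSet B := measurableSet_cellB x i
  have hwint := lapw_integrable hε
  have hintx := integrable_nearest_mul hε x
  have hintb := integrable_nearest_mul hε b
  -- P3 : in the right cell beyond s, the distance drops by exactly t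
  have P3 : ∀ y : ℝ, c + t ≤ y → (y : EReal) < ybar x (i.val + 1) →
      nearest b y ≤ nearest x y - t := by
    intro y h1 h2
    have hnx : nearest x y = y - c := by
      apply le_antisymm
      · have h := nearest_le x y i
        rwa [← hc, abs_of_pos (by linarith)] at h
      · apply le_nearest
        intro l
        rcases le_or_gt l i with hl | hl
        · have hxl : x l ≤ c := hsm.monotone hl
          rw [abs_of_pos (by linarith)]
          linarith
        · have hik : i.val + 1 < k := by
            have := l.isLt
            have : i.val + 1 ≤ l.val := hl
            omega
          rw [ybar_succ_eq x i hik, EReal.coe_lt_coe_iff] at h2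
          have hxl : x ⟨i.val + 1, hik⟩ ≤ x l := hsm.monotone (by rw [Fin.le_def]; exact hl)
          have hmid : y ≤ (c + x l)/2 := by
            have : (c + x ⟨i.val + 1, hik⟩)/2 ≤ (c + x l)/2 := by linarith
            linarith
          have habs := abs_near_left (show c ≤ x l by
            have := hsm.monotone (le_of_lt hl); linarith) hmid
          rw [abs_of_pos (by linarith)] at habs
          linarith [habs]
    have hnb : nearest b y ≤ y - s := by
      have h := nearest_update_le_self x i s y
      rw [← hb] at h
      rwa [abs_of_nonneg (by linarith)] at h
    rw [hnx]
    rw [hs] at hnb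
    linarith
  -- global Lipschitz bound
  have hd1 : ∀ y : ℝ, nearest b y ≤ nearest x y + t := by
    intro y
    have h := nearest_update_le_add x i s y
    rw [← hb] at h
    rwa [show |s - x i| = t by rw [hs, ← hc]; simp [abs_of_pos ht]] at h
  -- optimality gives nonnegative first difference
  have h0 : 0 ≤ ∫ y, (nearest b y * lapw ε y - nearest x y * lapw ε y) := by
    rw [MeasureTheory.integral_sub hintb hintx]
    have := hopt b
    rw [expErr_eq, expErr_eq] at this
    linarith
  -- pointwise upper bound
  set gb : ℝ → ℝ := fun y => t * A.indicator (lapw ε) y - t * B.indicator (lapw ε) y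
      + (2*t) * (Set.Ico c s).indicator (lapw ε) y with hgb
  have hLltc : ybar x i.val < (c : EReal) := by
    rcases Nat.eq_zero_or_pos i.val with h0' | h0'
    · rw [ybar_val_zero x i h0']; exact bot_lt_iff_ne_bot.mpr (EReal.coe_ne_bot c)
    · rw [ybar_val_eq x i h0', EReal.coe_lt_coe_iff]
      have : x ⟨i.val - 1, lt_of_le_of_lt (Nat.pred_le _) i.isLt⟩ < x i := by
        apply hsm
        rw [Fin.lt_def]
        simp only
        omega
      rw [← hc] at this ⊢
      linarith
  have hsleR : (s : EReal) ≤ ybar x (i.val + 1) := by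
    by_cases hik : i.val + 1 < k
    · rw [ybar_succ_eq x i hik, EReal.coe_le_coe_iff]
      have := hgap ⟨i.val + 1, hik⟩ (by rw [Fin.lt_def]; simp)
      rw [hs, ← hc]
      linarith
    · rw [ybar_succ_top x i hik]; exact le_top
  have hpt : ∀ y : ℝ, nearest b y * lapw ε y - nearest x y * lapw ε y ≤ gb y := by
    intro y
    have hw := lapw_pos hε y
    have hdy := hd1 y
    rcases le_or_gt (y : EReal) (ybar x i.val) with hyL | hyL
    · -- far left: no increase
      have hδ : nearest b y ≤ nearest x y := nearest_update_le_of_le_mid hsm.monotone i s hyL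
      have hyc : (y : EReal) < (c : EReal) := lt_of_le_of_lt hyL hLltc
      rw [EReal.coe_lt_coe_iff] at hyc
      have hyA : y ∉ A := fun h => absurd h.1 (not_lt.mpr hyL)
      have hyB : y ∉ B := fun h => absurd h.1 (not_lt.mpr hyc.le)
      have hyI : y ∉ Set.Ico c s := fun h => absurd h.1 (not_le.mpr hyc)
      rw [hgb]
      simp only [Set.indicator_of_notMem hyA, Set.indicator_of_notMem hyB,
        Set.indicator_of_notMem hyI]
      nlinarith
    · rcases lt_or_ge y c with hyc | hyc
      · -- inside A
        have hyA : y ∈ A := ⟨hyL, hyc⟩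
        have hyB : y ∉ B := fun h => absurd h.1 (not_lt.mpr hyc.le)
        have hyI : y ∉ Set.Ico c s := fun h => absurd h.1 (not_le.mpr hyc)
        rw [hgb]
        simp only [Set.indicator_of_mem hyA, Set.indicator_of_notMem hyB,
          Set.indicator_of_notMem hyI]
        nlinarith
      · rcases lt_or_ge y s with hys | hys
        · -- in [c, s)
          have hyA : y ∉ A := fun h => absurd h.2 (not_lt.mpr hyc)
          have hyI : y ∈ Set.Ico c s := ⟨hyc, hys⟩
          rw [hgb]
          by_cases hyB : y ∈ B
          · simp only [Set.indicator_of_notMem hyA, Set.indicator_of_mem hyB,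
              Set.indicator_of_mem hyI]
            nlinarith
          · simp only [Set.indicator_of_notMem hyA, Set.indicator_of_notMem hyB,
              Set.indicator_of_mem hyI]
            nlinarith
        · rcases lt_or_ge (y : EReal) (ybar x (i.val + 1)) with hyR | hyR
          · -- in [s, R): drop by t
            have hδ := P3 y (by rw [hs] at hys; linarith) hyR
            have hyA : y ∉ A := fun h => absurd h.2 (not_lt.mpr hyc)
            have hyB : y ∈ B := ⟨by rw [← hc]; rw [hs] at hys; linarith, hyR⟩
            have hyI : y ∉ Set.Ico c s := fun h => absurd h.2 (not_lt.mpr hys)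
            rw [hgb]
            simp only [Set.indicator_of_notMem hyA, Set.indicator_of_mem hyB,
              Set.indicator_of_notMem hyI]
            nlinarith
          · -- far right
            have hδ : nearest b y ≤ nearest x y :=
              nearest_update_le_of_mid_le hsm.monotone i s hyR
            have hyA : y ∉ A := fun h => absurd h.2 (not_lt.mpr hyc)
            have hyB : y ∉ B := fun h => absurd h.2 (not_lt.mpr hyR)
            have hyI : y ∉ Set.Ico c s := fun h => absurd h.2 (not_lt.mpr hys)
            rw [hgb]
            simp only [Set.indicator_of_notMem hyA, Set.indicator_of_notMem hyB,
              Set.indicator_of_notMem hyI]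
            nlinarith
  -- integrate
  have hiA : Integrable (A.indicator (lapw ε)) := hwint.indicator hAm
  have hiB : Integrable (B.indicator (lapw ε)) := hwint.indicator hBm
  have hiI : Integrable ((Set.Ico c s).indicator (lapw ε)) := hwint.indicator measurableSet_Ico
  have hgbint : Integrable gb :=
    ((hiA.const_mul t).sub (hiB.const_mul t)).add (hiI.const_mul (2*t))
  have hmono2 : ∫ y, (nearest b y * lapw ε y - nearest x y * lapw ε y) ≤ ∫ y, gb y :=
    MeasureTheory.integral_mono (hintb.sub hintx) hgbint hpt
  have e1 : ∫ y, t * A.indicator (lapw ε) y = t * ∫ y in A, lapw ε y := by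
    rw [MeasureTheory.integral_const_mul, MeasureTheory.integral_indicator hAm]
  have e2 : ∫ y, t * B.indicator (lapw ε) y = t * ∫ y in B, lapw ε y := by
    rw [MeasureTheory.integral_const_mul, MeasureTheory.integral_indicator hBm]
  have e3 : ∫ y, (2*t) * (Set.Ico c s).indicator (lapw ε) y
      = (2*t) * ∫ y in Set.Ico c s, lapw ε y := by
    rw [MeasureTheory.integral_const_mul, MeasureTheory.integral_indicator measurableSet_Ico]
  have hgbval : ∫ y, gb y = t * (∫ y in A, lapw ε y) - t * (∫ y in B, lapw ε y)
      + (2*t) * (∫ y in Set.Ico c s, lapw ε y) := by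
    calc ∫ y, gb y
        = (∫ y, (t * A.indicator (lapw ε) y - t * B.indicator (lapw ε) y)) +
          ∫ y, (2*t) * (Set.Ico c s).indicator (lapw ε) y :=
          MeasureTheory.integral_add ((hiA.const_mul t).sub (hiB.const_mul t))
            (hiI.const_mul (2*t))
      _ = ((∫ y, t * A.indicator (lapw ε) y) - ∫ y, t * B.indicator (lapw ε) y) +
          ∫ y, (2*t) * (Set.Ico c s).indicator (lapw ε) y := by
          rw [MeasureTheory.integral_sub (hiA.const_mul t) (hiB.const_mul t)]
      _ = t * (∫ y in A, lapw ε y) - t * (∫ y in B, lapw ε y)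
          + (2*t) * (∫ y in Set.Ico c s, lapw ε y) := by rw [e1, e2, e3]
  have hIco : ∫ y in Set.Ico c s, lapw ε y ≤ (ε/2) * t := by
    have h1 : ∫ y in Set.Ico c s, lapw ε y ≤ ∫ _ in Set.Ico c s, (ε/2 : ℝ) := by
      apply MeasureTheory.setIntegral_mono_on hwint.integrableOn
        ((MeasureTheory.integrableOn_const_iff).mpr (Or.inr (by
          rw [Real.volume_Ico]; exact ENNReal.ofReal_lt_top)))
        measurableSet_Ico
      intro y _
      exact lapw_le hε y
    have h2 : ∫ _ in Set.Ico c s, (ε/2 : ℝ) = t * (ε/2) := by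
      rw [MeasureTheory.setIntegral_const, Real.volume_real_Ico_of_le (by rw [hs]; linarith),
        smul_eq_mul]
      rw [hs]; ring_nf
    rw [h2] at h1
    linarith
  -- combine
  have final : t * (∫ y in B, lapw ε y) ≤ t * (∫ y in A, lapw ε y) + (2*t) * ((ε/2)*t) := by
    have h5 := le_trans h0 (hmono2.trans_eq hgbval)
    nlinarith [h5, hIco, ht.le]
  nlinarith [final, ht, mul_pos ht ht]
end chunk4
section chunk5
variable {k : ℕ} [NeZero k]

lemma master_left {ε : ℝ} (hε : 0 < ε) {x : Fin k → ℝ} (hsm : StrictMono x)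
    (hopt : ∀ b : Fin k → ℝ, expErr ε x ≤ expErr ε b) (i : Fin k) {t : ℝ} (ht : 0 < t)
    (hgap : ∀ j, j < i → x j + 2*t ≤ x i) :
    ∫ y in {z : ℝ | ybar x i.val < (z : EReal) ∧ z < x i}, lapw ε y ≤
      (∫ y in {z : ℝ | x i < z ∧ (z : EReal) < ybar x (i.val + 1)}, lapw ε y) + ε * t := by
  set c := x i with hc
  set s := c - t with hs
  set b := Function.update x i s with hb
  set A := {z : ℝ | ybar x i.val < (z : EReal) ∧ z < x i} with hA
  set B := {z : ℝ | x i < z ∧ (z : EReal) < ybar x (i.val + 1)} with hB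
  have hAm : MeasurableSet A := measurableSet_cellA x i
  have hBm : MeasurableSet B := measurableSet_cellB x i
  have hwint := lapw_integrable hε
  have hintx := integrable_nearest_mul hε x
  have hintb := integrable_nearest_mul hε b
  -- P3' : in the left cell before s, the distance drops by exactly t
  have P3 : ∀ y : ℝ, ybar x i.val < (y : EReal) → y ≤ c - t →
      nearest b y ≤ nearest x y - t := by
    intro y h2 h1
    have hnx : nearest x y = c - y := by
      apply le_antisymm
      · have h := nearest_le x y i
        rw [← hc, abs_of_nonpos (by linarith)] at h
        linarith
      · apply le_nearest
        intro l
        rcases le_or_gt i l with hl | hl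
        · have hxl : c ≤ x l := hsm.monotone hl
          linarith [neg_le_abs (y - x l)]
        · have h0i : 0 < i.val := by
            have : l.val < i.val := hl
            omega
          set i' : Fin k := ⟨i.val - 1, lt_of_le_of_lt (Nat.pred_le _) i.isLt⟩ with hi'
          rw [ybar_val_eq x i h0i, EReal.coe_lt_coe_iff] at h2
          rw [← hc, ← hi'] at h2
          have hxl : x l ≤ x i' := hsm.monotone (by
            rw [Fin.le_def]; simp only [hi']; omega)
          have hxlc : x l ≤ c := (hsm.monotone hl.le)
          have hmid : (x l + c)/2 ≤ y := by linarith
          have habs := abs_near_right hxlc hmid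
          rw [abs_of_nonpos (by linarith)] at habs
          linarith
    have hnb : nearest b y ≤ s - y := by
      have h := nearest_update_le_self x i s y
      rw [← hb, abs_of_nonpos (by rw [hs]; linarith)] at h
      linarith
    rw [hnx]
    rw [hs] at hnb
    linarith [hnb]
  -- global Lipschitz bound
  have hd1 : ∀ y : ℝ, nearest b y ≤ nearest x y + t := by
    intro y
    have h := nearest_update_le_add x i s y
    rw [← hb] at h
    rwa [show |s - x i| = t by
      rw [hs, ← hc, show c - t - c = -t by ring, abs_neg, abs_of_pos ht]] at h
  -- optimality gives nonnegative first difference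
  have h0 : 0 ≤ ∫ y, (nearest b y * lapw ε y - nearest x y * lapw ε y) := by
    rw [MeasureTheory.integral_sub hintb hintx]
    have := hopt b
    rw [expErr_eq, expErr_eq] at this
    linarith
  set gb : ℝ → ℝ := fun y => t * B.indicator (lapw ε) y - t * A.indicator (lapw ε) y
      + (2*t) * (Set.Ioc s c).indicator (lapw ε) y with hgb
  have hLltc : ybar x i.val < (c : EReal) := by
    rcases Nat.eq_zero_or_pos i.val with h0' | h0'
    · rw [ybar_val_zero x i h0']; exact bot_lt_iff_ne_bot.mpr (EReal.coe_ne_bot c)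
    · rw [ybar_val_eq x i h0', EReal.coe_lt_coe_iff]
      have : x ⟨i.val - 1, lt_of_le_of_lt (Nat.pred_le _) i.isLt⟩ < x i := by
        apply hsm
        rw [Fin.lt_def]
        simp only
        omega
      rw [← hc] at this ⊢
      linarith
  have hcltR : (c : EReal) < ybar x (i.val + 1) := by
    by_cases hik : i.val + 1 < k
    · rw [ybar_succ_eq x i hik, EReal.coe_lt_coe_iff]
      have : x i < x ⟨i.val + 1, hik⟩ := hsm (by rw [Fin.lt_def]; simp)
      rw [← hc] at this ⊢
      linarith
    · rw [ybar_succ_top x i hik]; exact EReal.coe_lt_top c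
  have hLles : ybar x i.val ≤ (s : EReal) := by
    rcases Nat.eq_zero_or_pos i.val with h0' | h0'
    · rw [ybar_val_zero x i h0']; exact bot_le
    · rw [ybar_val_eq x i h0', EReal.coe_le_coe_iff]
      set i' : Fin k := ⟨i.val - 1, lt_of_le_of_lt (Nat.pred_le _) i.isLt⟩ with hi'
      have := hgap i' (by rw [Fin.lt_def]; simp only [hi']; omega)
      rw [hs, ← hc]
      linarith
  have hpt : ∀ y : ℝ, nearest b y * lapw ε y - nearest x y * lapw ε y ≤ gb y := by
    intro y
    have hw := lapw_pos hε y
    have hdy := hd1 y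
    rcases le_or_gt (ybar x (i.val + 1)) (y : EReal) with hyR | hyR
    · -- far right: no increase
      have hδ : nearest b y ≤ nearest x y := nearest_update_le_of_mid_le hsm.monotone i s hyR
      have hcy : (c : EReal) < (y : EReal) := lt_of_lt_of_le hcltR hyR
      rw [EReal.coe_lt_coe_iff] at hcy
      have hyB : y ∉ B := fun h => absurd h.2 (not_lt.mpr hyR)
      have hyA : y ∉ A := fun h => absurd h.2 (not_lt.mpr hcy.le)
      have hyI : y ∉ Set.Ioc s c := fun h => absurd h.2 (not_le.mpr hcy)
      rw [hgb]
      simp only [Set.indicator_of_notMem hyA, Set.indicator_of_notMem hyB,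
        Set.indicator_of_notMem hyI]
      nlinarith
    · rcases lt_or_ge c y with hyc | hyc
      · -- inside B
        have hyB : y ∈ B := ⟨hyc, hyR⟩
        have hyA : y ∉ A := fun h => absurd h.2 (not_lt.mpr hyc.le)
        have hyI : y ∉ Set.Ioc s c := fun h => absurd h.2 (not_le.mpr hyc)
        rw [hgb]
        simp only [Set.indicator_of_mem hyB, Set.indicator_of_notMem hyA,
          Set.indicator_of_notMem hyI]
        nlinarith
      · rcases lt_or_ge s y with hys | hys
        · -- in (s, c]
          have hyB : y ∉ B := fun h => absurd h.1 (not_lt.mpr hyc)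
          have hyI : y ∈ Set.Ioc s c := ⟨hys, hyc⟩
          rw [hgb]
          by_cases hyA : y ∈ A
          · simp only [Set.indicator_of_notMem hyB, Set.indicator_of_mem hyA,
              Set.indicator_of_mem hyI]
            nlinarith
          · simp only [Set.indicator_of_notMem hyB, Set.indicator_of_notMem hyA,
              Set.indicator_of_mem hyI]
            nlinarith
        · rcases lt_or_ge (ybar x i.val) (y : EReal) with hyL | hyL
          · -- in (L, s]: drop by t
            have hδ := P3 y hyL (by rw [hs] at hys; linarith)
            have hyc' : y < c := by rw [hs] at hys; linarith
            have hyA : y ∈ A := ⟨hyL, hyc'⟩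
            have hyB : y ∉ B := fun h => absurd h.1 (not_lt.mpr hyc'.le)
            have hyI : y ∉ Set.Ioc s c := fun h => absurd h.1 (not_lt.mpr hys)
            rw [hgb]
            simp only [Set.indicator_of_mem hyA, Set.indicator_of_notMem hyB,
              Set.indicator_of_notMem hyI]
            nlinarith
          · -- far left
            have hδ : nearest b y ≤ nearest x y :=
              nearest_update_le_of_le_mid hsm.monotone i s hyL
            have hyc' : (y : EReal) < (c : EReal) := lt_of_le_of_lt hyL hLltc
            rw [EReal.coe_lt_coe_iff] at hyc'
            have hyA : y ∉ A := fun h => absurd h.1 (not_lt.mpr hyL)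
            have hyB : y ∉ B := fun h => absurd h.1 (not_lt.mpr hyc'.le)
            have hys' : y ≤ s := by
              have : (y : EReal) ≤ (s : EReal) := le_trans hyL hLles
              exact_mod_cast this
            have hyI : y ∉ Set.Ioc s c := fun h => absurd h.1 (not_lt.mpr hys')
            rw [hgb]
            simp only [Set.indicator_of_notMem hyA, Set.indicator_of_notMem hyB,
              Set.indicator_of_notMem hyI]
            nlinarith
  -- integrate
  have hiA : Integrable (A.indicator (lapw ε)) := hwint.indicator hAm
  have hiB : Integrable (B.indicator (lapw ε)) := hwint.indicator hBm
  have hiI : Integrable ((Set.Ioc s c).indicator (lapw ε)) := hwint.indicator measurableSet_Ioc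
  have hgbint : Integrable gb :=
    ((hiB.const_mul t).sub (hiA.const_mul t)).add (hiI.const_mul (2*t))
  have hmono2 : ∫ y, (nearest b y * lapw ε y - nearest x y * lapw ε y) ≤ ∫ y, gb y :=
    MeasureTheory.integral_mono (hintb.sub hintx) hgbint hpt
  have e1 : ∫ y, t * A.indicator (lapw ε) y = t * ∫ y in A, lapw ε y := by
    rw [MeasureTheory.integral_const_mul, MeasureTheory.integral_indicator hAm]
  have e2 : ∫ y, t * B.indicator (lapw ε) y = t * ∫ y in B, lapw ε y := by
    rw [MeasureTheory.integral_const_mul, MeasureTheory.integral_indicator hBm]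
  have e3 : ∫ y, (2*t) * (Set.Ioc s c).indicator (lapw ε) y
      = (2*t) * ∫ y in Set.Ioc s c, lapw ε y := by
    rw [MeasureTheory.integral_const_mul, MeasureTheory.integral_indicator measurableSet_Ioc]
  have hgbval : ∫ y, gb y = t * (∫ y in B, lapw ε y) - t * (∫ y in A, lapw ε y)
      + (2*t) * (∫ y in Set.Ioc s c, lapw ε y) := by
    calc ∫ y, gb y
        = (∫ y, (t * B.indicator (lapw ε) y - t * A.indicator (lapw ε) y)) +
          ∫ y, (2*t) * (Set.Ioc s c).indicator (lapw ε) y :=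
          MeasureTheory.integral_add ((hiB.const_mul t).sub (hiA.const_mul t))
            (hiI.const_mul (2*t))
      _ = ((∫ y, t * B.indicator (lapw ε) y) - ∫ y, t * A.indicator (lapw ε) y) +
          ∫ y, (2*t) * (Set.Ioc s c).indicator (lapw ε) y := by
          rw [MeasureTheory.integral_sub (hiB.const_mul t) (hiA.const_mul t)]
      _ = t * (∫ y in B, lapw ε y) - t * (∫ y in A, lapw ε y)
          + (2*t) * (∫ y in Set.Ioc s c, lapw ε y) := by rw [e1, e2, e3]
  have hIco : ∫ y in Set.Ioc s c, lapw ε y ≤ (ε/2) * t := by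
    have h1 : ∫ y in Set.Ioc s c, lapw ε y ≤ ∫ _ in Set.Ioc s c, (ε/2 : ℝ) := by
      apply MeasureTheory.setIntegral_mono_on hwint.integrableOn
        ((MeasureTheory.integrableOn_const_iff).mpr (Or.inr (by
          rw [Real.volume_Ioc]; exact ENNReal.ofReal_lt_top)))
        measurableSet_Ioc
      intro y _
      exact lapw_le hε y
    have h2 : ∫ _ in Set.Ioc s c, (ε/2 : ℝ) = t * (ε/2) := by
      rw [MeasureTheory.setIntegral_const, Real.volume_real_Ioc_of_le (by rw [hs]; linarith),
        smul_eq_mul]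
      rw [hs]; ring_nf
    rw [h2] at h1
    linarith
  have final : t * (∫ y in A, lapw ε y) ≤ t * (∫ y in B, lapw ε y) + (2*t) * ((ε/2)*t) := by
    have h5 := le_trans h0 (hmono2.trans_eq hgbval)
    nlinarith [h5, hIco, ht.le]
  nlinarith [final, ht, mul_pos ht ht]
end chunk5

/-- If `A = {x_1 ≤ … ≤ x_k}` minimizes the expected Laplace distance over all sets of at
most `k` points, then in each cell `(y_{i−1}, y_i)` the point `x_i` is a conditional
median: the Laplace mass of `(y_{i−1}, x_i)` equals that of `(x_i, y_i)`. -/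
theorem optimal_points_median_property (ε : ℝ) (hε : 0 < ε) (k : ℕ) (hk : 1 ≤ k)
    (x : Fin k → ℝ) (hmono : Monotone x)
    (hopt : ∀ b : Fin k → ℝ, expErr ε x ≤ expErr ε b) :
    ∀ i : Fin k,
      laplace ε 0 {z : ℝ | ybar x i.val < (z : EReal) ∧ z < x i} =
      laplace ε 0 {z : ℝ | x i < z ∧ (z : EReal) < ybar x (i.val + 1)} := by
  intro i
  haveI : NeZero k := ⟨by omega⟩
  have hinj : Function.Injective x := optimal_injective hε hopt
  have hsm : StrictMono x := hmono.strictMono_of_injective hinj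
  set A := {z : ℝ | ybar x i.val < (z : EReal) ∧ z < x i} with hA
  set B := {z : ℝ | x i < z ∧ (z : EReal) < ybar x (i.val + 1)} with hB
  have hAm : MeasurableSet A := measurableSet_cellA x i
  have hBm : MeasurableSet B := measurableSet_cellB x i
  suffices h : ∫ y in A, lapw ε y = ∫ y in B, lapw ε y by
    rw [laplace_apply hε hAm, laplace_apply hε hBm, h]
  have hR : ∃ t0 : ℝ, 0 < t0 ∧ ∀ t : ℝ, 0 < t → t ≤ t0 → ∀ j, i < j → x i + 2*t ≤ x j := by
    by_cases h : i.val + 1 < k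
    · refine ⟨(x ⟨i.val+1, h⟩ - x i)/4, ?_, ?_⟩
      · have := hsm (show i < ⟨i.val+1, h⟩ by rw [Fin.lt_def]; simp)
        linarith
      · intro t ht htle j hij
        have h1 : x ⟨i.val+1, h⟩ ≤ x j := hsm.monotone (by
          rw [Fin.le_def]; exact hij)
        linarith
    · refine ⟨1, one_pos, fun t _ _ j hij => ?_⟩
      exfalso
      have := j.isLt
      have : i.val < j.val := hij
      omega
  have hL : ∃ t0 : ℝ, 0 < t0 ∧ ∀ t : ℝ, 0 < t → t ≤ t0 → ∀ j, j < i → x j + 2*t ≤ x i := by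
    by_cases h : 0 < i.val
    · set i' : Fin k := ⟨i.val - 1, lt_of_le_of_lt (Nat.pred_le _) i.isLt⟩ with hi'
      refine ⟨(x i - x i')/4, ?_, ?_⟩
      · have := hsm (show i' < i by rw [Fin.lt_def]; simp only [hi']; omega)
        linarith
      · intro t ht htle j hij
        have h1 : x j ≤ x i' := hsm.monotone (by
          rw [Fin.le_def]
          simp only [hi']
          have : j.val < i.val := hij
          omega)
        linarith
    · refine ⟨1, one_pos, fun t _ _ j hij => ?_⟩
      exfalso
      have : j.val < i.val := hij
      omega
  obtain ⟨t0R, ht0R, hgapR⟩ := hR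
  obtain ⟨t0L, ht0L, hgapL⟩ := hL
  have hle1 : ∫ y in B, lapw ε y ≤ ∫ y in A, lapw ε y := by
    by_contra hcon
    push_neg at hcon
    set d : ℝ := (∫ y in B, lapw ε y) - (∫ y in A, lapw ε y) with hd
    have hdpos : 0 < d := by rw [hd]; linarith
    set t := min t0R (d/(2*ε)) with htdef
    have ht : 0 < t := lt_min ht0R (div_pos hdpos (by linarith))
    have hmr := master_right hε hsm hopt i ht (hgapR t ht (min_le_left _ _))
    have h2 : ε * t ≤ d/2 := by
      have h3 : t ≤ d/(2*ε) := min_le_right _ _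
      calc ε * t ≤ ε * (d/(2*ε)) := mul_le_mul_of_nonneg_left h3 hε.le
      _ = d/2 := by field_simp
    rw [← hA, ← hB] at hmr
    rw [hd] at h2
    linarith
  have hle2 : ∫ y in A, lapw ε y ≤ ∫ y in B, lapw ε y := by
    by_contra hcon
    push_neg at hcon
    set d : ℝ := (∫ y in A, lapw ε y) - (∫ y in B, lapw ε y) with hd
    have hdpos : 0 < d := by rw [hd]; linarith
    set t := min t0L (d/(2*ε)) with htdef
    have ht : 0 < t := lt_min ht0L (div_pos hdpos (by linarith))
    have hml := master_left hε hsm hopt i ht (hgapL t ht (min_le_left _ _))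
    have h2 : ε * t ≤ d/2 := by
      have h3 : t ≤ d/(2*ε) := min_le_right _ _
      calc ε * t ≤ ε * (d/(2*ε)) := mul_le_mul_of_nonneg_left h3 hε.le
      _ = d/2 := by field_simp
    rw [← hA, ← hB] at hml
    rw [hd] at h2
    linarith
  linarith

end
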